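/- arXiv:2205.01985 — 3 statements merged into one kernel-verified Lean document; each statement's English description precedes it below -/
import Mathlib

section
/- Let G=(V,E) be a finite simple undirected graph, and let β_e > 1 for all e ∈ E and 0 < λ_v ≤ 1 for all v ∈ V. Set p_e = (1/2)(1 − 1/β_e) for each e ∈ E. Then (∏_{e∈E} β_e) · Z_wrc(G; 2p, λ) = Z_Ising(G; β, λ), where 2p denotes the parameters (2p_e)_{e∈E}. -/
open Finset
open scoped Classical

noncomputable section

variable {V : Type*} [Fintype V] [DecidableEq V]

/-- The vertex set of the connected component of `v` in the graph `(V, S)`. -/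
def compOf (S : Finset (Sym2 V)) (v : V) : Finset V :=
  Finset.univ.filter fun u => (SimpleGraph.fromEdgeSet (↑S : Set (Sym2 V))).Reachable v u

/-- `κ(V,S)`: the set of vertex sets of connected components of the graph `(V, S)`. -/
def kappa (S : Finset (Sym2 V)) : Finset (Finset V) :=
  Finset.univ.image (compOf S)

/-- `∏_{C ∈ κ(V,S)} (1 + ∏_{u ∈ C} λ_u)`. -/
def clusterProd (S : Finset (Sym2 V)) (lam : V → ℝ) : ℝ :=
  ∏ C ∈ kappa S, (1 + ∏ u ∈ C, lam u)

/-- Weight of an edge subset `S ⊆ E₀` in the weighted random cluster model. -/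
def wtWRC (E₀ : Finset (Sym2 V)) (q : Sym2 V → ℝ) (lam : V → ℝ) (S : Finset (Sym2 V)) : ℝ :=
  (∏ e ∈ S, q e) * (∏ f ∈ E₀ \ S, (1 - q f)) * clusterProd S lam

/-- Partition function of the weighted random cluster model. -/
def ZWRC (E₀ : Finset (Sym2 V)) (q : Sym2 V → ℝ) (lam : V → ℝ) : ℝ :=
  ∑ S ∈ E₀.powerset, wtWRC E₀ q lam S

/-- The weighted random cluster distribution. -/
def piWRC (E₀ : Finset (Sym2 V)) (q : Sym2 V → ℝ) (lam : V → ℝ) (S : Finset (Sym2 V)) : ℝ :=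
  wtWRC E₀ q lam S / ZWRC E₀ q lam

/-- The monochromatic edges of a spin configuration `σ`. -/
def monoEdges (E₀ : Finset (Sym2 V)) (σ : V → Bool) : Finset (Sym2 V) :=
  E₀.filter fun e => (e.map σ).IsDiag

/-- Weight of a spin configuration in the Ising model. -/
def wtIsing (E₀ : Finset (Sym2 V)) (β : Sym2 V → ℝ) (lam : V → ℝ) (σ : V → Bool) : ℝ :=
  (∏ e ∈ monoEdges E₀ σ, β e) * ∏ v : V, (if σ v then lam v else 1)

/-- Ising partition function. -/
def ZIsing (E₀ : Finset (Sym2 V)) (β : Sym2 V → ℝ) (lam : V → ℝ) : ℝ :=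
  ∑ σ : V → Bool, wtIsing E₀ β lam σ

/-- Ising Gibbs distribution. -/
def piIsing (E₀ : Finset (Sym2 V)) (β : Sym2 V → ℝ) (lam : V → ℝ) (σ : V → Bool) : ℝ :=
  wtIsing E₀ β lam σ / ZIsing E₀ β lam

/-- Vertices of odd degree in the graph `(V, S)`. -/
def oddVerts (S : Finset (Sym2 V)) : Finset V :=
  Finset.univ.filter fun v => Odd (S.filter fun e => v ∈ e).card

/-- Weight of an edge subset in the subgraph-world model. -/
def wtSG (E₀ : Finset (Sym2 V)) (p : Sym2 V → ℝ) (η : V → ℝ) (S : Finset (Sym2 V)) : ℝ :=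
  (∏ e ∈ S, p e) * (∏ f ∈ E₀ \ S, (1 - p f)) * ∏ v ∈ oddVerts S, η v

/-- Subgraph-world partition function. -/
def ZSG (E₀ : Finset (Sym2 V)) (p : Sym2 V → ℝ) (η : V → ℝ) : ℝ :=
  ∑ S ∈ E₀.powerset, wtSG E₀ p η S

/-- Subgraph-world distribution. -/
def piSG (E₀ : Finset (Sym2 V)) (p : Sym2 V → ℝ) (η : V → ℝ) (S : Finset (Sym2 V)) : ℝ :=
  wtSG E₀ p η S / ZSG E₀ p η

/-- The transformation `P_{I→R}` from Ising configurations to edge subsets. -/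
def PIR (E₀ : Finset (Sym2 V)) (β : Sym2 V → ℝ) (σ : V → Bool) (S : Finset (Sym2 V)) : ℝ :=
  if S ⊆ monoEdges E₀ σ then
    (∏ e ∈ S, (1 - (β e)⁻¹)) * ∏ f ∈ monoEdges E₀ σ \ S, (β f)⁻¹
  else 0

/-- The transformation `P_{R→I}` from edge subsets to Ising configurations. -/
def PRI (E₀ : Finset (Sym2 V)) (lam : V → ℝ) (S : Finset (Sym2 V)) (σ : V → Bool) : ℝ :=
  if S ⊆ monoEdges E₀ σ then
    ∏ C ∈ kappa S, ((∏ v ∈ C, if σ v then lam v else 1) / (1 + ∏ v ∈ C, lam v))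
  else 0

/-- Swendsen-Wang dynamics for the Ising model: `P_{I→R} ⬝ P_{R→I}`. -/
def PSWIsing (E₀ : Finset (Sym2 V)) (β : Sym2 V → ℝ) (lam : V → ℝ) (σ τ : V → Bool) : ℝ :=
  ∑ S ∈ E₀.powerset, PIR E₀ β σ S * PRI E₀ lam S τ

/-- Swendsen-Wang dynamics for the weighted random cluster model: `P_{R→I} ⬝ P_{I→R}`. -/
def PSWwrc (E₀ : Finset (Sym2 V)) (β : Sym2 V → ℝ) (lam : V → ℝ)
    (S S' : Finset (Sym2 V)) : ℝ :=
  ∑ σ : V → Bool, PRI E₀ lam S σ * PIR E₀ β σ S'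

/-- Lazy edge-flipping (Metropolis) dynamics for a distribution `pi` on subsets of `E₀`. -/
def PEF (E₀ : Finset (Sym2 V)) (pi : Finset (Sym2 V) → ℝ) (x y : Finset (Sym2 V)) : ℝ :=
  if x = y then
    1 - (1 / (2 * (E₀.card : ℝ))) * ∑ e ∈ E₀, min 1 (pi (symmDiff x {e}) / pi x)
  else if (symmDiff x y).card = 1 then
    (1 / (2 * (E₀.card : ℝ))) * min 1 (pi y / pi x)
  else 0

/-- Variance of `f` with respect to a distribution `pi` supported on `states`. -/
def varOn {α : Type*} (states : Finset α) (pi f : α → ℝ) : ℝ :=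
  (∑ x ∈ states, pi x * f x ^ 2) - (∑ x ∈ states, pi x * f x) ^ 2

/-- Dirichlet form of a Markov kernel `P` with stationary distribution `pi` on `states`. -/
def dirichletOn {α : Type*} (states : Finset α) (pi : α → ℝ) (P : α → α → ℝ) (f : α → ℝ) : ℝ :=
  ∑ x ∈ states, pi x * f x * (f x - ∑ y ∈ states, P x y * f y)

/-- Spectral gap of a reversible Markov kernel `P` with stationary distribution `pi`. -/
def gapOn {α : Type*} (states : Finset α) (pi : α → ℝ) (P : α → α → ℝ) : ℝ :=
  sInf ((fun f : α → ℝ => dirichletOn states pi P f / varOn states pi f) ''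
    {f | varOn states pi f ≠ 0})

/-- Total variation distance between two distributions on `states`. -/
def dTV {α : Type*} (states : Finset α) (μ ν : α → ℝ) : ℝ :=
  (1 / 2) * ∑ z ∈ states, |μ z - ν z|

/-- `t`-step transition probabilities of the Markov kernel `P` on state space `states`. -/
def kpow {α : Type*} (states : Finset α) (P : α → α → ℝ) : ℕ → α → α → ℝ
  | 0 => fun x y => if x = y then 1 else 0
  | (t + 1) => fun x y => ∑ z ∈ states, P x z * kpow states P t z y

/-!
Writing each monochromatic factor as `β_e = 1 + (β_e - 1)` and expanding turns `Z_Ising` into a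
sum over edge sets `S` of `∏_{e ∈ S} (β_e - 1)` times the field weight of all spin configurations
that are constant on the components of `(V, S)`; choosing the spin of each component independently,
that weight is `∏_{C ∈ κ(V,S)} (1 + ∏_{u ∈ C} λ_u)`. When `q_e = 2 p_e = 1 - 1/β_e`, multiplying the
random cluster weight of `S` by `∏_e β_e` produces the same summand, since `β_e q_e = β_e - 1` and
`β_e (1 - q_e) = 1`.
-/

open SimpleGraph

theorem Finset.sum_prod_comp_eq_prod_sum_fiber {κ ι α R : Type*} [Fintype κ] [Fintype ι]
    [DecidableEq ι] [Fintype α] [CommSemiring R] (π : κ → ι) (f : κ → α → R) :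
    ∑ τ : ι → α, ∏ k, f k (τ (π k)) = ∏ i, ∑ a, ∏ k with π k = i, f k a := by
  rw [Fintype.prod_sum]
  refine sum_congr rfl fun τ _ => ?_
  rw [← prod_fiberwise univ π]
  exact prod_congr rfl fun i _ => prod_congr rfl fun k hk => by rw [(mem_filter.mp hk).2]

namespace SimpleGraph

variable {W α : Type*} {H : SimpleGraph W}

theorem Reachable.apply_eq_of_forall_adj {σ : W → α} (hσ : ∀ u v, H.Adj u v → σ u = σ v)
    {u v : W} (h : H.Reachable u v) : σ u = σ v := by
  obtain ⟨p⟩ := h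
  induction p with
  | nil => rfl
  | cons h _ ih => exact (hσ _ _ h).trans ih

theorem forall_adj_eq_iff_exists_comp_connectedComponentMk (σ : W → α) :
    (∀ u v, H.Adj u v → σ u = σ v) ↔
      ∃ τ : H.ConnectedComponent → α, τ ∘ H.connectedComponentMk = σ := by
  refine ⟨fun hσ => ?_, ?_⟩
  · exact ⟨ConnectedComponent.lift σ fun _ _ p _ => p.reachable.apply_eq_of_forall_adj hσ, rfl⟩
  · rintro ⟨τ, rfl⟩ u v h
    exact congrArg τ (ConnectedComponent.connectedComponentMk_eq_of_adj h)

theorem sum_prod_of_forall_adj_eq {R : Type*} [CommSemiring R] [Fintype W] [DecidableEq W]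
    [Fintype α] [Fintype H.ConnectedComponent] [DecidableEq H.ConnectedComponent]
    [DecidablePred fun σ : W → α => ∀ u v, H.Adj u v → σ u = σ v] (f : W → α → R) :
    ∑ σ : W → α with ∀ u v, H.Adj u v → σ u = σ v, ∏ v, f v (σ v) =
      ∏ c : H.ConnectedComponent, ∑ a, ∏ v with H.connectedComponentMk v = c, f v a := by
  have hmk : Function.Surjective H.connectedComponentMk := Quot.mk_surjective
  have hrange : (univ.filter fun σ : W → α => ∀ u v, H.Adj u v → σ u = σ v) =
      univ.image (· ∘ H.connectedComponentMk) := by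
    ext σ
    simp [forall_adj_eq_iff_exists_comp_connectedComponentMk]
  rw [hrange, sum_image fun _ _ _ _ h => hmk.injective_comp_right h]
  exact sum_prod_comp_eq_prod_sum_fiber _ f

end SimpleGraph

omit [Fintype V] in
theorem subset_monoEdges_iff {E₀ S : Finset (Sym2 V)} (hS : S ⊆ E₀) (σ : V → Bool) :
    S ⊆ monoEdges E₀ σ ↔ ∀ u v, (fromEdgeSet (S : Set (Sym2 V))).Adj u v → σ u = σ v := by
  refine ⟨fun h u v huv => ?_, fun h e he => mem_filter.mpr ⟨hS he, ?_⟩⟩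
  · simpa using (mem_filter.mp (h ((fromEdgeSet_adj _).mp huv).1)).2
  · induction e using Sym2.ind with
    | _ u v =>
      by_cases huv : u = v
      · simp [huv]
      · simpa using h u v ((fromEdgeSet_adj _).mpr ⟨he, huv⟩)

theorem compOf_eq_filter_connectedComponentMk (S : Finset (Sym2 V)) (v : V) :
    compOf S v = univ.filter fun u => (fromEdgeSet (S : Set (Sym2 V))).connectedComponentMk u =
      (fromEdgeSet (S : Set (Sym2 V))).connectedComponentMk v := by
  ext u
  simp [compOf, reachable_comm]

theorem prod_kappa_eq_prod_connectedComponent {M : Type*} [CommMonoid M] (S : Finset (Sym2 V))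
    (F : Finset V → M) :
    ∏ C ∈ kappa S, F C = ∏ c : (fromEdgeSet (S : Set (Sym2 V))).ConnectedComponent,
      F {v | (fromEdgeSet (S : Set (Sym2 V))).connectedComponentMk v = c} := by
  set H := fromEdgeSet (S : Set (Sym2 V))
  set supp : H.ConnectedComponent → Finset V := fun c => {v | H.connectedComponentMk v = c}
  have hmk : Function.Surjective H.connectedComponentMk := Quot.mk_surjective
  have hkappa : kappa S = univ.image supp := by
    rw [kappa, ← image_univ_of_surjective hmk, image_image]
    exact image_congr fun v _ => compOf_eq_filter_connectedComponentMk S v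
  have hsupp : Function.Injective supp := by
    intro c d h
    obtain ⟨v, rfl⟩ := hmk c
    have hv : v ∈ supp (H.connectedComponentMk v) := by simp [supp]
    rw [h] at hv
    simpa [supp] using hv
  rw [hkappa, prod_image hsupp.injOn]

theorem sum_subset_monoEdges_eq_clusterProd {E₀ S : Finset (Sym2 V)} (hS : S ⊆ E₀)
    (lam : V → ℝ) :
    ∑ σ : V → Bool with S ⊆ monoEdges E₀ σ, ∏ v, (if σ v then lam v else 1) =
      clusterProd S lam := by
  rw [filter_congr fun σ _ => subset_monoEdges_iff hS σ,
    sum_prod_of_forall_adj_eq fun v (b : Bool) => if b then lam v else 1, clusterProd,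
    prod_kappa_eq_prod_connectedComponent]
  refine prod_congr rfl fun c _ => ?_
  simp [add_comm]

omit [DecidableEq V] in
theorem wtIsing_eq_sum_powerset (E₀ : Finset (Sym2 V)) (β : Sym2 V → ℝ) (lam : V → ℝ)
    (σ : V → Bool) :
    wtIsing E₀ β lam σ = ∑ S ∈ (monoEdges E₀ σ).powerset,
      (∏ e ∈ S, (β e - 1)) * ∏ v, (if σ v then lam v else 1) := by
  rw [wtIsing, ← sum_mul, ← prod_add_one]
  simp

theorem ZIsing_eq_sum_powerset (E₀ : Finset (Sym2 V)) (β : Sym2 V → ℝ) (lam : V → ℝ) :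
    ZIsing E₀ β lam = ∑ S ∈ E₀.powerset, (∏ e ∈ S, (β e - 1)) * clusterProd S lam := by
  simp_rw [ZIsing, wtIsing_eq_sum_powerset]
  rw [sum_comm' (t' := E₀.powerset) (s' := fun S => {σ | S ⊆ monoEdges E₀ σ})]
  · refine sum_congr rfl fun S hS => ?_
    rw [← mul_sum, sum_subset_monoEdges_eq_clusterProd (mem_powerset.mp hS)]
  · intro σ S
    simpa using fun h : S ⊆ monoEdges E₀ σ => h.trans (filter_subset _ _)

theorem prod_mul_wtWRC {E₀ S : Finset (Sym2 V)} (hS : S ⊆ E₀) {β q : Sym2 V → ℝ}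
    (hβ : ∀ e ∈ E₀, β e ≠ 0) (hq : ∀ e ∈ E₀, q e = 1 - (β e)⁻¹) (lam : V → ℝ) :
    (∏ e ∈ E₀, β e) * wtWRC E₀ q lam S = (∏ e ∈ S, (β e - 1)) * clusterProd S lam := by
  have hin : ∀ e ∈ S, β e * q e = β e - 1 := fun e he => by
    rw [hq e (hS he), mul_sub, mul_inv_cancel₀ (hβ e (hS he)), mul_one]
  have hout : ∀ e ∈ E₀ \ S, β e * (1 - q e) = 1 := fun e he => by
    rw [hq e (mem_sdiff.mp he).1, sub_sub_cancel, mul_inv_cancel₀ (hβ e (mem_sdiff.mp he).1)]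
  calc (∏ e ∈ E₀, β e) * wtWRC E₀ q lam S
      = (∏ e ∈ S, β e * q e) * (∏ e ∈ E₀ \ S, β e * (1 - q e)) * clusterProd S lam := by
        rw [wtWRC, prod_mul_distrib, prod_mul_distrib, ← prod_sdiff hS]
        ring
    _ = (∏ e ∈ S, (β e - 1)) * clusterProd S lam := by
        rw [prod_congr rfl hin, prod_congr rfl hout, prod_const_one, mul_one]

theorem prod_mul_ZWRC {E₀ : Finset (Sym2 V)} {β q : Sym2 V → ℝ} (hβ : ∀ e ∈ E₀, β e ≠ 0)
    (hq : ∀ e ∈ E₀, q e = 1 - (β e)⁻¹) (lam : V → ℝ) :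
    (∏ e ∈ E₀, β e) * ZWRC E₀ q lam =
      ∑ S ∈ E₀.powerset, (∏ e ∈ S, (β e - 1)) * clusterProd S lam := by
  rw [ZWRC, mul_sum]
  exact sum_congr rfl fun S hS => prod_mul_wtWRC (mem_powerset.mp hS) hβ hq lam

theorem ising_eq_wrc_general {V : Type*} [Fintype V] [DecidableEq V]
    (G : SimpleGraph V) [DecidableRel G.Adj]
    (β : Sym2 V → ℝ) (lam : V → ℝ) (p : Sym2 V → ℝ)
    (hβ : ∀ e ∈ G.edgeFinset, 1 < β e)
    (hp : ∀ e ∈ G.edgeFinset, p e = (1 / 2) * (1 - (β e)⁻¹)) :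
    (∏ e ∈ G.edgeFinset, β e) * ZWRC G.edgeFinset (fun e => 2 * p e) lam =
      ZIsing G.edgeFinset β lam := by
  have hβ0 : ∀ e ∈ G.edgeFinset, β e ≠ 0 := fun e he => (zero_lt_one.trans (hβ e he)).ne'
  have hq : ∀ e ∈ G.edgeFinset, 2 * p e = 1 - (β e)⁻¹ := fun e he => by
    rw [hp e he]
    ring
  rw [prod_mul_ZWRC hβ0 hq, ZIsing_eq_sum_powerset]

/-- Equivalence of the Ising and weighted random cluster partition functions:
`(∏_e β_e) · Z_wrc(G; 2p, λ) = Z_Ising(G; β, λ)` where `p_e = (1/2)(1 − 1/β_e)`. -/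
theorem ising_eq_wrc {V : Type*} [Fintype V] [DecidableEq V]
    (G : SimpleGraph V) [DecidableRel G.Adj]
    (β : Sym2 V → ℝ) (lam : V → ℝ) (p : Sym2 V → ℝ)
    (hβ : ∀ e ∈ G.edgeFinset, 1 < β e)
    (hlam : ∀ v : V, 0 < lam v ∧ lam v ≤ 1)
    (hp : ∀ e ∈ G.edgeFinset, p e = (1 / 2) * (1 - (β e)⁻¹)) :
    (∏ e ∈ G.edgeFinset, β e) * ZWRC G.edgeFinset (fun e => 2 * p e) lam =
      ZIsing G.edgeFinset β lam :=
  ising_eq_wrc_general G β lam p hβ hp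

end
end

section
/- Let G=(V,E) be a finite simple undirected graph, and let β_e > 1 for all e ∈ E and 0 < λ_v ≤ 1 for all v ∈ V. Set p_e = (1/2)(1 − 1/β_e) for each e ∈ E and η_v = (1−λ_v)/(1+λ_v) for each v ∈ V. Then Z_Ising(G; β, λ) = (∏_{v∈V}(1+λ_v)) · (∏_{e∈E} β_e) · Z_sg(G; p, η). -/
open Finset
open scoped Classical

noncomputable section

variable {V : Type*} [Fintype V] [DecidableEq V]

/-! High-temperature expansion. Writing `s_v = ±1` for the spins, each edge factor is
`β_e ^ 1[s_u = s_v] = β_e ((1 - p_e) + p_e s_u s_v)` and each vertex factor is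
`λ_v ^ σ(v) = (1 + λ_v) / 2 · (1 + η_v s_v)`. Expanding the edge product over `S ⊆ E` leaves
`∏_{uv ∈ S} s_u s_v = ∏_{v ∈ odd(S)} s_v`, and the sum over spins then factorizes over vertices:
`∑_{s = ±1} s^[v ∈ odd(S)] (1 + η_v s)` is `2 η_v` or `2`. -/

section

variable {V : Type*}

def spin (b : Bool) : ℝ := if b then -1 else 1

lemma spin_pow (b : Bool) (k : ℕ) : spin b ^ k = if Odd k then spin b else 1 := by
  cases b
  · simp [spin]
  · split_ifs with hk
    · exact hk.neg_one_pow
    · exact (Nat.not_odd_iff_even.mp hk).neg_one_pow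

lemma ite_eq_mul_one_add_mul_spin {b : Bool} (lam : ℝ) (hlam : 1 + lam ≠ 0) :
    (if b then lam else 1) = (1 + lam) / 2 * (1 + (1 - lam) / (1 + lam) * spin b) := by
  cases b <;> simp [spin] <;> field_simp <;> ring

lemma prod_ite_eq_prod_mul_prod_spin [Fintype V] {lam η : V → ℝ} (hlam : ∀ v, 1 + lam v ≠ 0)
    (hη : ∀ v, η v = (1 - lam v) / (1 + lam v)) (σ : V → Bool) :
    ∏ v, (if σ v then lam v else 1) =
      (∏ v, (1 + lam v) / 2) * ∏ v, (1 + η v * spin (σ v)) := by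
  simp_rw [hη, ← prod_mul_distrib]
  exact prod_congr rfl fun v _ => ite_eq_mul_one_add_mul_spin (lam v) (hlam v)

variable [DecidableEq V]

lemma prod_toFinset_spin {e : Sym2 V} (he : ¬e.IsDiag) (σ : V → Bool) :
    ∏ v ∈ e.toFinset, spin (σ v) = if (e.map σ).IsDiag then 1 else -1 := by
  induction e with
  | _ u v =>
    rw [Sym2.mk_isDiag_iff] at he
    rw [Sym2.toFinset_mk_eq, prod_pair he, Sym2.map_mk]
    cases σ u <;> cases σ v <;> simp [spin]

lemma prod_prod_toFinset_spin_eq_prod_oddVerts [Fintype V] (S : Finset (Sym2 V)) (σ : V → Bool) :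
    ∏ e ∈ S, ∏ v ∈ e.toFinset, spin (σ v) = ∏ v ∈ oddVerts S, spin (σ v) := by
  calc ∏ e ∈ S, ∏ v ∈ e.toFinset, spin (σ v)
      = ∏ v, ∏ e ∈ S, if v ∈ e then spin (σ v) else 1 := by
        rw [prod_comm]
        refine prod_congr rfl fun e _ => ?_
        rw [← univ_inter e.toFinset, ← prod_ite_mem]
        simp_rw [Sym2.mem_toFinset]
    _ = ∏ v, spin (σ v) ^ #{e ∈ S | v ∈ e} := by
        simp_rw [← prod_filter, prod_const]
    _ = ∏ v ∈ oddVerts S, spin (σ v) := by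
        simp_rw [spin_pow, ← prod_filter]; rfl

lemma sum_prod_spin_mul_prod [Fintype V] (W : Finset V) (η : V → ℝ) :
    ∑ σ : V → Bool, (∏ v ∈ W, spin (σ v)) * ∏ v, (1 + η v * spin (σ v)) =
      2 ^ Fintype.card V * ∏ v ∈ W, η v := by
  have hfactor (v : V) : ∑ b, (if v ∈ W then spin b else 1) * (1 + η v * spin b) =
      2 * if v ∈ W then η v else 1 := by
    split_ifs <;> simp [spin] <;> ring
  calc ∑ σ : V → Bool, (∏ v ∈ W, spin (σ v)) * ∏ v, (1 + η v * spin (σ v))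
      = ∑ σ : V → Bool, ∏ v, (if v ∈ W then spin (σ v) else 1) * (1 + η v * spin (σ v)) := by
        simp_rw [prod_mul_distrib, prod_ite_mem, univ_inter]
    _ = 2 ^ Fintype.card V * ∏ v ∈ W, η v := by
        rw [← Fintype.prod_sum fun v b => (if v ∈ W then spin b else 1) * (1 + η v * spin b)]
        simp_rw [hfactor, prod_mul_distrib, prod_ite_mem, univ_inter, prod_const, card_univ]

lemma ite_isDiag_map_eq_mul_add {e : Sym2 V} (he : ¬e.IsDiag) (σ : V → Bool) {β : ℝ} (hβ : β ≠ 0) :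
    (if (e.map σ).IsDiag then β else 1) =
      β * (1 / 2 * (1 - β⁻¹) * ∏ v ∈ e.toFinset, spin (σ v) + (1 - 1 / 2 * (1 - β⁻¹))) := by
  rw [prod_toFinset_spin he]
  split_ifs <;> field_simp <;> ring

lemma prod_monoEdges_eq_sum (E₀ : Finset (Sym2 V)) (hE : ∀ e ∈ E₀, ¬e.IsDiag) [Fintype V]
    {β p : Sym2 V → ℝ} (hβ : ∀ e ∈ E₀, β e ≠ 0) (hp : ∀ e ∈ E₀, p e = 1 / 2 * (1 - (β e)⁻¹))
    (σ : V → Bool) :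
    ∏ e ∈ monoEdges E₀ σ, β e = (∏ e ∈ E₀, β e) *
      ∑ S ∈ E₀.powerset, (∏ e ∈ S, p e) * (∏ f ∈ E₀ \ S, (1 - p f)) *
        ∏ v ∈ oddVerts S, spin (σ v) := by
  calc ∏ e ∈ monoEdges E₀ σ, β e
      = ∏ e ∈ E₀, β e * (p e * ∏ v ∈ e.toFinset, spin (σ v) + (1 - p e)) := by
        rw [monoEdges, prod_filter]
        exact prod_congr rfl fun e he => by rw [hp e he, ite_isDiag_map_eq_mul_add (hE e he) σ (hβ e he)]
    _ = _ := by
        rw [prod_mul_distrib, prod_add]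
        congr 1
        refine sum_congr rfl fun S _ => ?_
        rw [prod_mul_distrib, prod_prod_toFinset_spin_eq_prod_oddVerts]
        ring

theorem ZIsing_eq_ZSG [Fintype V] (E₀ : Finset (Sym2 V)) (hE : ∀ e ∈ E₀, ¬e.IsDiag)
    {β p : Sym2 V → ℝ} (hβ : ∀ e ∈ E₀, β e ≠ 0) (hp : ∀ e ∈ E₀, p e = 1 / 2 * (1 - (β e)⁻¹))
    {lam η : V → ℝ} (hlam : ∀ v, 1 + lam v ≠ 0) (hη : ∀ v, η v = (1 - lam v) / (1 + lam v)) :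
    ZIsing E₀ β lam = (∏ v, (1 + lam v)) * (∏ e ∈ E₀, β e) * ZSG E₀ p η := by
  have hvert : (∏ v, (1 + lam v) / 2) * 2 ^ Fintype.card V = ∏ v, (1 + lam v) := by
    rw [prod_div_distrib, prod_const, card_univ, div_mul_cancel₀ _ (by positivity)]
  calc ZIsing E₀ β lam
      = ∑ σ : V → Bool, (∏ e ∈ E₀, β e) * (∏ v, (1 + lam v) / 2) *
          ∑ S ∈ E₀.powerset, (∏ e ∈ S, p e) * (∏ f ∈ E₀ \ S, (1 - p f)) *
            ((∏ v ∈ oddVerts S, spin (σ v)) * ∏ v, (1 + η v * spin (σ v))) := by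
        refine sum_congr rfl fun σ _ => ?_
        rw [wtIsing, prod_monoEdges_eq_sum E₀ hE hβ hp, prod_ite_eq_prod_mul_prod_spin hlam hη]
        simp_rw [mul_sum, sum_mul]
        refine sum_congr rfl fun S _ => ?_
        ring
    _ = (∏ e ∈ E₀, β e) * (∏ v, (1 + lam v) / 2) *
          ∑ S ∈ E₀.powerset, (∏ e ∈ S, p e) * (∏ f ∈ E₀ \ S, (1 - p f)) *
            (2 ^ Fintype.card V * ∏ v ∈ oddVerts S, η v) := by
        rw [← mul_sum, sum_comm]
        simp_rw [← mul_sum, sum_prod_spin_mul_prod]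
    _ = (∏ v, (1 + lam v)) * (∏ e ∈ E₀, β e) * ZSG E₀ p η := by
        rw [ZSG, ← hvert, mul_sum, mul_sum]
        refine sum_congr rfl fun S _ => ?_
        rw [wtSG]
        ring

end

/-- Equivalence of the Ising and subgraph-world partition functions:
`Z_Ising(G; β, λ) = (∏_v (1+λ_v)) (∏_e β_e) Z_sg(G; p, η)`
where `p_e = (1/2)(1 − 1/β_e)` and `η_v = (1−λ_v)/(1+λ_v)`. -/
theorem ising_eq_sg {V : Type*} [Fintype V] [DecidableEq V]
    (G : SimpleGraph V) [DecidableRel G.Adj]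
    (β : Sym2 V → ℝ) (lam : V → ℝ) (p : Sym2 V → ℝ) (η : V → ℝ)
    (hβ : ∀ e ∈ G.edgeFinset, 1 < β e)
    (hlam : ∀ v : V, 0 < lam v ∧ lam v ≤ 1)
    (hp : ∀ e ∈ G.edgeFinset, p e = (1 / 2) * (1 - (β e)⁻¹))
    (hη : ∀ v : V, η v = (1 - lam v) / (1 + lam v)) :
    ZIsing G.edgeFinset β lam =
      (∏ v : V, (1 + lam v)) * (∏ e ∈ G.edgeFinset, β e) * ZSG G.edgeFinset p η :=
  ZIsing_eq_ZSG G.edgeFinset (fun _ he => G.not_isDiag_of_mem_edgeSet (G.mem_edgeFinset.mp he))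
    (fun e he => (zero_lt_one.trans (hβ e he)).ne') hp
    (fun v => (add_pos one_pos (hlam v).1).ne') hη

end
end

section
/- Let G=(V,E) be a finite simple undirected graph with β_e > 1 for all e ∈ E and 0 < λ_v ≤ 1 for all v ∈ V, and let the weighted random cluster model have edge parameters q_e = 1 − 1/β_e and vertex weights λ. Define P_SW^Ising = P_{I→R}·P_{R→I} and P_SW^wrc = P_{R→I}·P_{I→R}. Then both Swendsen-Wang transition matrices are positive semidefinite with respect to the respective stationary inner products: for every h : {0,1}^V → ℝ, Σ_{σ∈{0,1}^V} π_Ising(σ)·h(σ)·(P_SW^Ising h)(σ) ≥ 0, and for every g : 2^E → ℝ, Σ_{S⊆E} π_wrc(S)·g(S)·(P_SW^wrc g)(S) ≥ 0, where (P h)(x) = Σ_y P(x,y) h(y). -/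
/-!
Both chains are products of two kernels that are adjoint through the Edwards–Sokal joint
weight `w(σ, S) = 1[S ⊆ M(σ)] ∏_{e ∈ S} (β_e - 1) ∏_v λ_v^{σ(v)}`: this weight equals
`wt_Ising(σ) P_{I→R}(σ, S)` and also `(∏_e β_e) wt_wrc(S) P_{R→I}(S, σ)`. For a product `A B`
of kernels with `π(a) A(a, i) = ν(i) B(i, a)` and `ν ≥ 0`, the quadratic form `⟨h, A B h⟩_π`
equals `Σ_i ν(i) (B h)(i)²`, which is nonnegative.
-/

open Finset
open scoped Classical

noncomputable section

variable {V : Type*} [Fintype V] [DecidableEq V]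

theorem quadForm_comp_eq_sum_sq {α ι : Type*} (sα : Finset α) (sι : Finset ι)
    (A : α → ι → ℝ) (B : ι → α → ℝ) (pi : α → ℝ) (ν : ι → ℝ)
    (hbalance : ∀ a ∈ sα, ∀ i ∈ sι, pi a * A a i = ν i * B i a) (h : α → ℝ) :
    ∑ a ∈ sα, pi a * h a * ∑ b ∈ sα, (∑ i ∈ sι, A a i * B i b) * h b
      = ∑ i ∈ sι, ν i * (∑ a ∈ sα, B i a * h a) ^ 2 := by
  calc ∑ a ∈ sα, pi a * h a * ∑ b ∈ sα, (∑ i ∈ sι, A a i * B i b) * h b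
      = ∑ a ∈ sα, ∑ i ∈ sι, pi a * A a i * h a * ∑ b ∈ sα, B i b * h b := by
        refine sum_congr rfl fun a _ => ?_
        simp only [sum_mul, mul_sum]
        rw [sum_comm]
        exact sum_congr rfl fun _ _ => sum_congr rfl fun _ _ => by ring
    _ = ∑ i ∈ sι, ∑ a ∈ sα, ν i * (B i a * h a) * ∑ b ∈ sα, B i b * h b := by
        rw [sum_comm]
        exact sum_congr rfl fun i hi => sum_congr rfl fun a ha => by
          rw [hbalance a ha i hi, mul_assoc (ν i)]
    _ = ∑ i ∈ sι, ν i * (∑ a ∈ sα, B i a * h a) ^ 2 := by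
        refine sum_congr rfl fun i _ => ?_
        rw [← sum_mul, ← mul_sum, sq, mul_assoc]

theorem quadForm_comp_nonneg {α ι : Type*} (sα : Finset α) (sι : Finset ι)
    (A : α → ι → ℝ) (B : ι → α → ℝ) (pi : α → ℝ) (ν : ι → ℝ) (hν : ∀ i ∈ sι, 0 ≤ ν i)
    (hbalance : ∀ a ∈ sα, ∀ i ∈ sι, pi a * A a i = ν i * B i a) (h : α → ℝ) :
    0 ≤ ∑ a ∈ sα, pi a * h a * ∑ b ∈ sα, (∑ i ∈ sι, A a i * B i b) * h b := by
  rw [quadForm_comp_eq_sum_sq sα sι A B pi ν hbalance h]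
  exact sum_nonneg fun i hi => mul_nonneg (hν i hi) (sq_nonneg _)

theorem prod_mul_prod_sdiff_inv {ι : Type*} [DecidableEq ι] {s t : Finset ι} {f : ι → ℝ}
    (hts : t ⊆ s) (hf : ∀ i ∈ s, f i ≠ 0) :
    (∏ i ∈ s, f i) * ∏ i ∈ s \ t, (f i)⁻¹ = ∏ i ∈ t, f i := by
  rw [← prod_sdiff hts, prod_inv_distrib, mul_comm, ← mul_assoc,
    inv_mul_cancel₀ (prod_ne_zero_iff.mpr fun i hi => hf i (mem_sdiff.mp hi).1), one_mul]

theorem prod_mul_prod_one_sub_inv {ι : Type*} {s : Finset ι} {f : ι → ℝ}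
    (hf : ∀ i ∈ s, f i ≠ 0) :
    (∏ i ∈ s, f i) * ∏ i ∈ s, (1 - (f i)⁻¹) = ∏ i ∈ s, (f i - 1) := by
  rw [← prod_mul_distrib]
  exact prod_congr rfl fun i hi => by rw [mul_sub, mul_one, mul_inv_cancel₀ (hf i hi)]

theorem mem_compOf {S : Finset (Sym2 V)} {v u : V} :
    u ∈ compOf S v ↔ (SimpleGraph.fromEdgeSet (↑S : Set (Sym2 V))).Reachable v u := by
  simp [compOf]

theorem compOf_eq_of_reachable {S : Finset (Sym2 V)} {v u : V}
    (h : (SimpleGraph.fromEdgeSet (↑S : Set (Sym2 V))).Reachable v u) :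
    compOf S v = compOf S u := by
  ext x
  simp only [mem_compOf]
  exact ⟨h.symm.trans, h.trans⟩

theorem kappa_pairwiseDisjoint (S : Finset (Sym2 V)) :
    (kappa S : Set (Finset V)).PairwiseDisjoint id := by
  intro C₁ h₁ C₂ h₂ hne
  obtain ⟨v, -, rfl⟩ := mem_image.mp h₁
  obtain ⟨u, -, rfl⟩ := mem_image.mp h₂
  refine disjoint_left.mpr fun x hxv hxu => hne (compOf_eq_of_reachable ?_)
  exact (mem_compOf.mp hxv).trans (mem_compOf.mp hxu).symm

theorem kappa_biUnion (S : Finset (Sym2 V)) : (kappa S).biUnion id = univ :=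
  eq_univ_of_forall fun v => mem_biUnion.mpr
    ⟨compOf S v, mem_image_of_mem _ (mem_univ v), mem_compOf.mpr (.refl v)⟩

theorem prod_kappa_prod {M : Type*} [CommMonoid M] (S : Finset (Sym2 V)) (f : V → M) :
    ∏ C ∈ kappa S, ∏ v ∈ C, f v = ∏ v, f v := by
  rw [← kappa_biUnion S, prod_biUnion (kappa_pairwiseDisjoint S)]
  rfl

theorem clusterProd_mul_PRI {E₀ S : Finset (Sym2 V)} {lam : V → ℝ} {σ : V → Bool}
    (hS : S ⊆ monoEdges E₀ σ) (hlam : ∀ v, 0 ≤ lam v) :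
    clusterProd S lam * PRI E₀ lam S σ = ∏ v, if σ v then lam v else 1 := by
  rw [clusterProd, PRI, if_pos hS, ← prod_mul_distrib, ← prod_kappa_prod S]
  refine prod_congr rfl fun C _ => mul_div_cancel₀ _ ?_
  exact (add_pos_of_pos_of_nonneg one_pos (prod_nonneg fun v _ => hlam v)).ne'

def esWeight (E₀ : Finset (Sym2 V)) (β : Sym2 V → ℝ) (lam : V → ℝ) (σ : V → Bool)
    (S : Finset (Sym2 V)) : ℝ :=
  if S ⊆ monoEdges E₀ σ then (∏ e ∈ S, (β e - 1)) * ∏ v, (if σ v then lam v else 1) else 0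

theorem wtIsing_mul_PIR {E₀ S : Finset (Sym2 V)} {β : Sym2 V → ℝ} {lam : V → ℝ}
    {σ : V → Bool} (hβ : ∀ e ∈ E₀, β e ≠ 0) :
    wtIsing E₀ β lam σ * PIR E₀ β σ S = esWeight E₀ β lam σ S := by
  unfold wtIsing PIR esWeight
  split_ifs with hS
  · have hM : ∀ e ∈ monoEdges E₀ σ, β e ≠ 0 := fun e he => hβ e (filter_subset _ _ he)
    rw [← prod_mul_prod_one_sub_inv fun e he => hM e (hS he), ← prod_mul_prod_sdiff_inv hS hM]
    ring
  · rw [mul_zero]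

theorem prod_mul_wtWRC_mul_PRI {E₀ : Finset (Sym2 V)} {β : Sym2 V → ℝ} {lam : V → ℝ}
    {σ : V → Bool} {S : Finset (Sym2 V)} (hβ : ∀ e ∈ E₀, β e ≠ 0) (hlam : ∀ v, 0 ≤ lam v)
    (hSE : S ⊆ E₀) :
    (∏ e ∈ E₀, β e) * wtWRC E₀ (fun e => 1 - (β e)⁻¹) lam S * PRI E₀ lam S σ
      = esWeight E₀ β lam σ S := by
  by_cases hS : S ⊆ monoEdges E₀ σ
  · rw [esWeight, if_pos hS, wtWRC, mul_assoc, mul_assoc, clusterProd_mul_PRI hS hlam,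
      ← prod_mul_prod_one_sub_inv fun e he => hβ e (hSE he), ← prod_mul_prod_sdiff_inv hSE hβ]
    simp only [sub_sub_cancel]
    ring
  · rw [PRI, esWeight, if_neg hS, if_neg hS, mul_zero]

section SwendsenWang

variable {E₀ : Finset (Sym2 V)} {β : Sym2 V → ℝ} {lam : V → ℝ}
  (hβ : ∀ e ∈ E₀, 1 ≤ β e) (hlam : ∀ v, 0 ≤ lam v)

include hβ hlam

omit [DecidableEq V] in
theorem wtIsing_nonneg (σ : V → Bool) : 0 ≤ wtIsing E₀ β lam σ :=
  mul_nonneg (prod_nonneg fun e he => zero_le_one.trans (hβ e (filter_subset _ _ he)))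
    (prod_nonneg fun v _ => by split_ifs <;> simp [hlam v])

theorem wtWRC_nonneg {S : Finset (Sym2 V)} (hSE : S ⊆ E₀) :
    0 ≤ wtWRC E₀ (fun e => 1 - (β e)⁻¹) lam S := by
  refine mul_nonneg (mul_nonneg (prod_nonneg fun e he => ?_) (prod_nonneg fun e he => ?_))
    (prod_nonneg fun C _ => add_nonneg zero_le_one (prod_nonneg fun v _ => hlam v))
  · exact sub_nonneg.mpr (inv_le_one_of_one_le₀ (hβ e (hSE he)))
  · rw [sub_sub_cancel]
    exact inv_nonneg.mpr (zero_le_one.trans (hβ e (mem_sdiff.mp he).1))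

theorem PSWIsing_quadForm_nonneg (h : (V → Bool) → ℝ) :
    0 ≤ ∑ σ : V → Bool, piIsing E₀ β lam σ * h σ *
      ∑ τ : V → Bool, PSWIsing E₀ β lam σ τ * h τ := by
  have hprod : 0 < ∏ e ∈ E₀, β e := prod_pos fun e he => one_pos.trans_le (hβ e he)
  have hβ0 : ∀ e ∈ E₀, β e ≠ 0 := fun e he => (one_pos.trans_le (hβ e he)).ne'
  refine quadForm_comp_nonneg univ E₀.powerset (PIR E₀ β) (PRI E₀ lam) (piIsing E₀ β lam)
    (fun S => (∏ e ∈ E₀, β e) * wtWRC E₀ (fun e => 1 - (β e)⁻¹) lam S / ZIsing E₀ β lam)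
    (fun S hS => div_nonneg (mul_nonneg hprod.le (wtWRC_nonneg hβ hlam (mem_powerset.mp hS)))
      (sum_nonneg fun σ _ => wtIsing_nonneg hβ hlam σ)) (fun σ _ S hS => ?_) h
  rw [piIsing, div_mul_eq_mul_div, wtIsing_mul_PIR hβ0, div_mul_eq_mul_div,
    prod_mul_wtWRC_mul_PRI hβ0 hlam (mem_powerset.mp hS)]

theorem PSWwrc_quadForm_nonneg (g : Finset (Sym2 V) → ℝ) :
    0 ≤ ∑ S ∈ E₀.powerset, piWRC E₀ (fun e => 1 - (β e)⁻¹) lam S * g S *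
      ∑ S' ∈ E₀.powerset, PSWwrc E₀ β lam S S' * g S' := by
  have hprod : 0 < ∏ e ∈ E₀, β e := prod_pos fun e he => one_pos.trans_le (hβ e he)
  have hβ0 : ∀ e ∈ E₀, β e ≠ 0 := fun e he => (one_pos.trans_le (hβ e he)).ne'
  refine quadForm_comp_nonneg E₀.powerset univ (PRI E₀ lam) (PIR E₀ β)
    (piWRC E₀ (fun e => 1 - (β e)⁻¹) lam)
    (fun σ => wtIsing E₀ β lam σ / ((∏ e ∈ E₀, β e) * ZWRC E₀ (fun e => 1 - (β e)⁻¹) lam))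
    (fun σ _ => div_nonneg (wtIsing_nonneg hβ hlam σ) (mul_nonneg hprod.le
      (sum_nonneg fun S hS => wtWRC_nonneg hβ hlam (mem_powerset.mp hS))))
    (fun S hS σ _ => ?_) g
  rw [piWRC, div_mul_eq_mul_div, div_mul_eq_mul_div, wtIsing_mul_PIR hβ0,
    ← prod_mul_wtWRC_mul_PRI hβ0 hlam (mem_powerset.mp hS), mul_assoc,
    mul_div_mul_left _ _ hprod.ne']

end SwendsenWang

/-- Positive semidefiniteness of the Swendsen-Wang dynamics with respect to the stationary
inner products, with `q_e = 1 − 1/β_e`. -/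
theorem sw_posSemidef {V : Type*} [Fintype V] [DecidableEq V]
    (G : SimpleGraph V) [DecidableRel G.Adj]
    (β : Sym2 V → ℝ) (lam : V → ℝ)
    (hβ : ∀ e ∈ G.edgeFinset, 1 < β e)
    (hlam : ∀ v : V, 0 < lam v ∧ lam v ≤ 1) :
    (∀ h : (V → Bool) → ℝ,
      0 ≤ ∑ σ : V → Bool, piIsing G.edgeFinset β lam σ * h σ *
        (∑ τ : V → Bool, PSWIsing G.edgeFinset β lam σ τ * h τ)) ∧
    (∀ g : Finset (Sym2 V) → ℝ,
      0 ≤ ∑ S ∈ G.edgeFinset.powerset,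
        piWRC G.edgeFinset (fun e => 1 - (β e)⁻¹) lam S * g S *
          (∑ S' ∈ G.edgeFinset.powerset, PSWwrc G.edgeFinset β lam S S' * g S')) := by
  have hβ' : ∀ e ∈ G.edgeFinset, 1 ≤ β e := fun e he => (hβ e he).le
  have hlam' : ∀ v, 0 ≤ lam v := fun v => (hlam v).1.le
  exact ⟨PSWIsing_quadForm_nonneg hβ' hlam', PSWwrc_quadForm_nonneg hβ' hlam'⟩

end
end
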